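/- arXiv:cs/0701045 — 3 statements merged into one kernel-verified Lean document; each statement's English description precedes it below -/
import Mathlib

section
/- Let n ≥ 3 and let P = (V_0,…,V_{n−1}) be an n-gon in ℝ². The following are equivalent: (I) P is ordinary, locally-strict, and convex; (II) P is quasi-strict and convex; (III) P is strict and convex. -/
/-- The argument of a nonzero vector `v = (x,y)` in the plane: the unique `ψ ∈ [0, 2π)`
with `x = |v| cos ψ` and `y = |v| sin ψ`. -/
noncomputable def parg (v : ℝ × ℝ) : ℝ :=
  if Complex.arg ((v.1 : ℂ) + v.2 * Complex.I) < 0 then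
    Complex.arg ((v.1 : ℂ) + v.2 * Complex.I) + 2 * Real.pi
  else
    Complex.arg ((v.1 : ℂ) + v.2 * Complex.I)

/-- The argument `α_i = arg (V_{i+1} - V_i)` of the `i`-th edge vector of the `n`-gon `V`
(indices taken mod `n`, so that `V_n = V_0`). -/
noncomputable def edgeArg (n : ℕ) (V : ℕ → ℝ × ℝ) (i : ℕ) : ℝ :=
  parg (V ((i + 1) % n) - V i)

/-- An `n`-gon is convex if the union of its edges `[V_i, V_{i+1}]` coincides with the
topological boundary of the convex hull of its vertex set. -/
def IsConvexPolygon (n : ℕ) (V : ℕ → ℝ × ℝ) : Prop :=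
  (⋃ i ∈ Finset.range n, segment ℝ (V i) (V ((i + 1) % n)))
    = frontier (convexHull ℝ (V '' Set.Iio n))

/-- `V_i ≠ V_{i+1}` for all `i` (with `V_n = V_0`). -/
def LocallyOrdinary (n : ℕ) (V : ℕ → ℝ × ℝ) : Prop :=
  ∀ i < n, V i ≠ V ((i + 1) % n)

/-- All vertices are pairwise distinct. -/
def Ordinary (n : ℕ) (V : ℕ → ℝ × ℝ) : Prop :=
  ∀ i < n, ∀ j < n, i ≠ j → V i ≠ V j

/-- For every `i`, the vertices `V_{i-1}, V_i, V_{i+1}` are non-collinear. -/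
def LocallyStrict (n : ℕ) (V : ℕ → ℝ × ℝ) : Prop :=
  ∀ i < n, ¬ Collinear ℝ ({V ((i + n - 1) % n), V i, V ((i + 1) % n)} : Set (ℝ × ℝ))

/-- No two adjacent vertices `V_i, V_{i⊕1}` are collinear with any other vertex `V_j`. -/
def QuasiStrict (n : ℕ) (V : ℕ → ℝ × ℝ) : Prop :=
  ∀ i < n, ∀ j < n, j ≠ i → j ≠ (i + 1) % n →
    ¬ Collinear ℝ ({V i, V ((i + 1) % n), V j} : Set (ℝ × ℝ))

/-- No three distinct vertices are collinear. -/
def StrictPolygon (n : ℕ) (V : ℕ → ℝ × ℝ) : Prop :=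
  ∀ i < n, ∀ j < n, ∀ k < n, i ≠ j → i ≠ k → j ≠ k →
    ¬ Collinear ℝ ({V i, V j, V k} : Set (ℝ × ℝ))

/-- The half-open edge `[V_i, V_{i+1})` of the `n`-gon `V`. -/
def halfOpenEdge (n : ℕ) (V : ℕ → ℝ × ℝ) (i : ℕ) : Set (ℝ × ℝ) :=
  segment ℝ (V i) (V ((i + 1) % n)) \ {V ((i + 1) % n)}

/-- `[V_i, V_{i+1}) ∩ [V_{i+1}, V_{i+2}) = ∅` for all `i`. -/
def LocallySimple (n : ℕ) (V : ℕ → ℝ × ℝ) : Prop :=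
  ∀ i < n, halfOpenEdge n V i ∩ halfOpenEdge n V ((i + 1) % n) = ∅

/-- `[V_i, V_{i+1}) ∩ [V_j, V_{j+1}) = ∅` for all distinct `i, j`. -/
def SimplePolygon (n : ℕ) (V : ℕ → ℝ × ℝ) : Prop :=
  ∀ i < n, ∀ j < n, i ≠ j → halfOpenEdge n V i ∩ halfOpenEdge n V j = ∅

/-- The `n`-gon `V` is c-increasing: for some `k ∈ {0,…,n-1}`, one has
`α_k < … < α_{n-1} < α_0 < … < α_{k-1}`, where `α_i = arg (V_{i+1} - V_i)`.
(Equivalently: `α` is strictly increasing along the cyclic order starting at `k`.) -/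
noncomputable def CIncreasing (n : ℕ) (V : ℕ → ℝ × ℝ) : Prop :=
  ∃ k < n, ∀ i < n, ∀ j < n,
    (i + n - k) % n < (j + n - k) % n → edgeArg n V i < edgeArg n V j

/-- c-decreasing: all the inequalities in the definition of c-increasing are reversed. -/
noncomputable def CDecreasing (n : ℕ) (V : ℕ → ℝ × ℝ) : Prop :=
  ∃ k < n, ∀ i < n, ∀ j < n,
    (i + n - k) % n < (j + n - k) % n → edgeArg n V i > edgeArg n V j

/-- c-nondecreasing: as c-increasing, with `≤` in place of `<`. -/
noncomputable def CNondecreasing (n : ℕ) (V : ℕ → ℝ × ℝ) : Prop :=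
  ∃ k < n, ∀ i < n, ∀ j < n,
    (i + n - k) % n < (j + n - k) % n → edgeArg n V i ≤ edgeArg n V j

/-- c-nonincreasing: as c-increasing, with `≥` in place of `<`. -/
noncomputable def CNonincreasing (n : ℕ) (V : ℕ → ℝ × ℝ) : Prop :=
  ∃ k < n, ∀ i < n, ∀ j < n,
    (i + n - k) % n < (j + n - k) % n → edgeArg n V i ≥ edgeArg n V j

/-! If three vertices of a convex polygon are collinear, one of them, `V m`, lies strictly between
the other two, `V a` and `V c`. Local strictness provides an edge `[V m, V w]` leaving the line
through `V a` and `V c`. Its midpoint lies on the boundary of the convex hull, but also in the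
interior of the nondegenerate triangle `V a, V c, V w`, hence in the interior of the hull.
The remaining implications are bookkeeping with indices mod `n`. -/

open Set Module

theorem mem_interior_convexHull_of_mem_openSegment {E : Type*} [NormedAddCommGroup E]
    [NormedSpace ℝ E] [FiniteDimensional ℝ E] (hdim : finrank ℝ E = 2) {a c w b x : E}
    (hacw : ¬ Collinear ℝ {a, c, w}) (hb : b ∈ openSegment ℝ a c) (hx : x ∈ openSegment ℝ b w) :
    x ∈ interior (convexHull ℝ {a, c, w}) := by
  have hind : AffineIndependent ℝ ![a, c, w] := affineIndependent_iff_not_collinear_set.2 hacw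
  let t : AffineBasis (Fin 3) ℝ E :=
    ⟨![a, c, w], hind, hind.affineSpan_eq_top_iff_card_eq_finrank_add_one.2 (by simp [hdim])⟩
  have hrange : range t = {a, c, w} := by
    change range ![a, c, w] = _
    rw [Matrix.range_cons, Matrix.range_cons_cons_empty, singleton_union]
  rw [openSegment_eq_image_lineMap] at hb hx
  obtain ⟨s, ⟨hs0, hs1⟩, rfl⟩ := hb
  obtain ⟨r, ⟨hr0, hr1⟩, rfl⟩ := hx
  rw [← hrange, t.interior_convexHull]
  intro i
  -- the barycentric coordinates of `x` are `(1 - r) (1 - s)`, `(1 - r) s` and `r`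
  rw [AffineMap.apply_lineMap, AffineMap.apply_lineMap,
    show a = t 0 from rfl, show c = t 1 from rfl, show w = t 2 from rfl]
  fin_cases i <;> simp [AffineMap.lineMap_apply_module] <;> nlinarith

theorem add_mod_ne_self {n i d : ℕ} (hd : 0 < d) (hdn : d < n) (hi : i < n) :
    (i + d) % n ≠ i := by
  rcases lt_or_ge (i + d) n with h | h
  · rw [Nat.mod_eq_of_lt h]
    omega
  · rw [Nat.mod_eq_sub_mod h, Nat.mod_eq_of_lt (by omega)]
    omega

theorem add_sub_one_mod_add_one_mod {n i : ℕ} (hi : i < n) : ((i + n - 1) % n + 1) % n = i := by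
  rw [Nat.mod_add_mod, Nat.sub_add_cancel (by omega), Nat.add_mod_right, Nat.mod_eq_of_lt hi]

variable {n : ℕ} {V : ℕ → ℝ × ℝ}

theorem StrictPolygon.quasiStrict (hn : 2 ≤ n) (h : StrictPolygon n V) : QuasiStrict n V :=
  fun i hi j hj hji hji' => h i hi _ (Nat.mod_lt _ (by omega)) j hj
    (add_mod_ne_self one_pos (by omega) hi).symm hji.symm hji'.symm

theorem QuasiStrict.ordinary (hn : 3 ≤ n) (h : QuasiStrict n V) : Ordinary n V := by
  intro i hi j hj hij heq
  by_cases hj' : j = (i + 1) % n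
  · subst hj'
    have hk : (i + 2) % n ≠ (i + 1) % n := by
      rw [← Nat.mod_add_mod (i + 1) n 1]
      exact add_mod_ne_self one_pos (by omega) (Nat.mod_lt _ (by omega))
    refine h i hi _ (Nat.mod_lt _ (by omega)) (add_mod_ne_self two_pos (by omega) hi) hk ?_
    rw [← heq, insert_eq_of_mem (mem_insert _ _)]
    exact collinear_pair ℝ _ _
  · refine h i hi j hj (Ne.symm hij) hj' ?_
    rw [← heq, pair_comm, insert_eq_of_mem (mem_insert _ _), pair_comm]
    exact collinear_pair ℝ _ _

theorem QuasiStrict.locallyStrict (hn : 3 ≤ n) (h : QuasiStrict n V) : LocallyStrict n V := by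
  intro i hi hcol
  have hpi : (i + n - 1) % n ≠ i := by
    rw [show i + n - 1 = i + (n - 1) by omega]
    exact add_mod_ne_self (by omega) (by omega) hi
  have hpi' : (i + n - 1) % n ≠ (i + 1) % n := by
    intro hp
    apply add_mod_ne_self (n := n) two_pos (by omega) (Nat.mod_lt (i + n - 1) (by omega))
    calc ((i + n - 1) % n + 2) % n = (((i + n - 1) % n + 1) % n + 1) % n := by
          simp only [Nat.mod_add_mod, add_assoc, Nat.reduceAdd]
      _ = (i + n - 1) % n := by rw [add_sub_one_mod_add_one_mod hi, hp]
  refine h i hi _ (Nat.mod_lt _ (by omega)) hpi hpi' (hcol.subset ?_)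
  intro x hx
  simp only [mem_insert_iff, mem_singleton_iff] at hx ⊢
  tauto

theorem IsConvexPolygon.segment_subset_frontier (h : IsConvexPolygon n V) {i : ℕ} (hi : i < n) :
    segment ℝ (V i) (V ((i + 1) % n)) ⊆ frontier (convexHull ℝ (V '' Iio n)) := by
  rw [← h]
  exact subset_biUnion_of_mem (u := fun i => segment ℝ (V i) (V ((i + 1) % n)))
    (Finset.mem_coe.2 (Finset.mem_range.2 hi))

theorem IsConvexPolygon.vertex_notMem_openSegment (hconv : IsConvexPolygon n V)
    (hls : LocallyStrict n V) {m a c : ℕ} (hm : m < n) (ha : a < n) (hc : c < n)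
    (hac : V a ≠ V c) : V m ∉ openSegment ℝ (V a) (V c) := by
  intro hmac
  have hV : ∀ i < n, V i ∈ convexHull ℝ (V '' Iio n) :=
    fun i hi => subset_convexHull ℝ _ ⟨i, hi, rfl⟩
  have hline : ∀ u, Collinear ℝ {V a, V c, u} → u ∈ line[ℝ, V a, V c] := fun u hu =>
    hu.mem_affineSpan_of_mem_of_ne (by simp) (by simp) (by simp) hac
  have hm_line : V m ∈ line[ℝ, V a, V c] :=
    (mem_segment_iff_wbtw.1 (openSegment_subset_segment ℝ _ _ hmac)).mem_affineSpan
  obtain ⟨w, hw, hacw, hedge⟩ : ∃ w < n, ¬ Collinear ℝ {V a, V c, V w} ∧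
      segment ℝ (V m) (V w) ⊆ frontier (convexHull ℝ (V '' Iio n)) := by
    by_cases hnext : Collinear ℝ {V a, V c, V ((m + 1) % n)}
    · refine ⟨(m + n - 1) % n, Nat.mod_lt _ (by omega), fun hprev => hls m hm ?_, ?_⟩
      · exact collinear_triple_of_mem_affineSpan_pair (hline _ hprev) hm_line (hline _ hnext)
      · rw [segment_symm]
        simpa only [add_sub_one_mod_add_one_mod hm] using
          hconv.segment_subset_frontier (Nat.mod_lt (m + n - 1) (by omega))
    · exact ⟨(m + 1) % n, Nat.mod_lt _ (by omega), hnext, hconv.segment_subset_frontier hm⟩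
  have hmid_int : midpoint ℝ (V m) (V w) ∈ interior (convexHull ℝ (V '' Iio n)) := by
    refine interior_mono (convexHull_min ?_ (convex_convexHull ℝ _)) <|
      mem_interior_convexHull_of_mem_openSegment (by simp) hacw hmac
        (midpoint_mem_openSegment _ _)
    simp only [insert_subset_iff, singleton_subset_iff]
    exact ⟨hV a ha, hV c hc, hV w hw⟩
  exact disjoint_interior_frontier.le_bot ⟨hmid_int, hedge (midpoint_mem_segment _ _)⟩

theorem IsConvexPolygon.strictPolygon (hconv : IsConvexPolygon n V) (hord : Ordinary n V)
    (hls : LocallyStrict n V) : StrictPolygon n V := by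
  intro i hi j hj k hk hij hik hjk hcol
  have hij := hord i hi j hj hij
  have hik := hord i hi k hk hik
  have hjk := hord j hj k hk hjk
  rcases hcol.wbtw_or_wbtw_or_wbtw with h | h | h
  · exact hconv.vertex_notMem_openSegment hls hj hi hk hik
      (mem_openSegment_of_ne_left_right hij hjk.symm h.mem_segment)
  · exact hconv.vertex_notMem_openSegment hls hk hj hi hij.symm
      (mem_openSegment_of_ne_left_right hjk hik h.mem_segment)
  · exact hconv.vertex_notMem_openSegment hls hi hk hj hjk.symm
      (mem_openSegment_of_ne_left_right hik.symm hij.symm h.mem_segment)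

/-- For an `n`-gon with `n ≥ 3`, the following are equivalent:
(I) ordinary, locally-strict and convex; (II) quasi-strict and convex;
(III) strict and convex. -/
theorem strictly_convex_characterizations
    (n : ℕ) (hn : 3 ≤ n) (V : ℕ → ℝ × ℝ) :
    ((Ordinary n V ∧ LocallyStrict n V ∧ IsConvexPolygon n V) ↔
        (QuasiStrict n V ∧ IsConvexPolygon n V)) ∧
    ((QuasiStrict n V ∧ IsConvexPolygon n V) ↔
        (StrictPolygon n V ∧ IsConvexPolygon n V)) := by
  have hQS : QuasiStrict n V ∧ IsConvexPolygon n V ↔ StrictPolygon n V ∧ IsConvexPolygon n V :=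
    ⟨fun ⟨hq, hc⟩ => ⟨hc.strictPolygon (hq.ordinary hn) (hq.locallyStrict hn), hc⟩,
      fun ⟨hs, hc⟩ => ⟨hs.quasiStrict (by omega), hc⟩⟩
  refine ⟨⟨fun ⟨ho, hl, hc⟩ => hQS.2 ⟨hc.strictPolygon ho hl, hc⟩,
    fun ⟨hq, hc⟩ => ⟨hq.ordinary hn, hq.locallyStrict hn, hc⟩⟩, hQS⟩
end

section
/- Let u = (s,t) and v = (x,y) be nonzero vectors in ℝ², and let Δ := sy − tx. Then arg u < arg v if and only if one of the following holds: (u ∈ H₋ and v ∈ H₊), or (u ∈ H₋ and v ∈ H₋ and Δ > 0), or (u ∈ H₊ and v ∈ H₊ and Δ > 0). -/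
/-- The open upper half-plane together with the strictly positive `x`-axis. -/
def Hminus : Set (ℝ × ℝ) := {p | 0 < p.2 ∨ (p.2 = 0 ∧ 0 < p.1)}

/-- The open lower half-plane together with the strictly negative `x`-axis. -/
def Hplus : Set (ℝ × ℝ) := {p | p.2 < 0 ∨ (p.2 = 0 ∧ p.1 < 0)}

/-! Since `parg` is `Complex.arg` shifted from `(-π, π]` to `[0, 2π)`, the vectors of `H₋` are
exactly those with argument in `[0, π)` and those of `H₊` those with argument in `[π, 2π)`.
Within one half-plane two arguments differ by less than `π`, so there the sign of
`Δ = |u| |v| sin (arg v - arg u)` decides which argument is the larger. -/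

open Complex

lemma fst_ne_zero_or_snd_ne_zero {p : ℝ × ℝ} (hp : p ≠ 0) : p.1 ≠ 0 ∨ p.2 ≠ 0 := by
  contrapose! hp
  exact Prod.ext hp.1 hp.2

lemma mem_Hplus_iff_notMem_Hminus {p : ℝ × ℝ} (hp : p ≠ 0) : p ∈ Hplus ↔ p ∉ Hminus := by
  have := fst_ne_zero_or_snd_ne_zero hp
  simp only [Hplus, Hminus, Set.mem_ofPred_eq]
  grind

lemma Real.sin_sub_pos_iff_lt {a b : ℝ} (h : |b - a| < Real.pi) :
    0 < Real.sin (b - a) ↔ a < b := by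
  rw [abs_lt] at h
  refine ⟨fun hsin => ?_, fun hab => Real.sin_pos_of_pos_of_lt_pi (by linarith) h.2⟩
  by_contra! hba
  linarith [Real.sin_nonpos_of_nonpos_of_neg_pi_le (by linarith : b - a ≤ 0) h.1.le]

lemma lt_iff_of_mem_Ico_zero_two_pi {a b : ℝ} (ha : a ∈ Set.Ico 0 (2 * Real.pi))
    (hb : b ∈ Set.Ico 0 (2 * Real.pi)) :
    a < b ↔ (a < Real.pi ∧ Real.pi ≤ b) ∨ (a < Real.pi ∧ b < Real.pi ∧ 0 < Real.sin (b - a)) ∨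
      (Real.pi ≤ a ∧ Real.pi ≤ b ∧ 0 < Real.sin (b - a)) := by
  obtain ⟨ha₀, ha₂⟩ := ha
  obtain ⟨hb₀, hb₂⟩ := hb
  rcases lt_or_ge a Real.pi with ha | ha <;> rcases lt_or_ge b Real.pi with hb | hb
  · rw [Real.sin_sub_pos_iff_lt (abs_sub_lt_iff.2 ⟨by linarith, by linarith⟩)]
    grind
  · exact iff_of_true (by linarith) (Or.inl ⟨ha, hb⟩)
  · exact iff_of_false (by linarith) (by grind)
  · rw [Real.sin_sub_pos_iff_lt (abs_sub_lt_iff.2 ⟨by linarith, by linarith⟩)]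
    grind

lemma parg_eq_ite (p : ℝ × ℝ) :
    parg p = if arg (equivRealProd.symm p) < 0 then arg (equivRealProd.symm p) + 2 * Real.pi
      else arg (equivRealProd.symm p) := by
  rw [equivRealProd_symm_apply]
  rfl

lemma parg_mem_Ico (p : ℝ × ℝ) : parg p ∈ Set.Ico 0 (2 * Real.pi) := by
  obtain ⟨hlo, hhi⟩ := arg_mem_Ioc (equivRealProd.symm p)
  rw [parg_eq_ite]
  split_ifs <;> constructor <;> linarith [Real.pi_pos]

lemma norm_mul_cos_parg (p : ℝ × ℝ) : ‖equivRealProd.symm p‖ * Real.cos (parg p) = p.1 := by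
  rw [parg_eq_ite]
  split_ifs <;> simp [Real.cos_add_two_pi, norm_mul_cos_arg]

lemma norm_mul_sin_parg (p : ℝ × ℝ) : ‖equivRealProd.symm p‖ * Real.sin (parg p) = p.2 := by
  rw [parg_eq_ite]
  split_ifs <;> simp [Real.sin_add_two_pi, norm_mul_sin_arg]

lemma cross_eq_norm_mul_norm_mul_sin_sub_parg (u v : ℝ × ℝ) :
    u.1 * v.2 - u.2 * v.1 =
      ‖equivRealProd.symm u‖ * ‖equivRealProd.symm v‖ * Real.sin (parg v - parg u) := by
  rw [Real.sin_sub, ← norm_mul_cos_parg u, ← norm_mul_sin_parg u, ← norm_mul_cos_parg v,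
    ← norm_mul_sin_parg v]
  ring

lemma cross_pos_iff_sin_sub_parg_pos {u v : ℝ × ℝ} (hu : u ≠ 0) (hv : v ≠ 0) :
    0 < u.1 * v.2 - u.2 * v.1 ↔ 0 < Real.sin (parg v - parg u) := by
  have norm_pos {p : ℝ × ℝ} (hp : p ≠ 0) : 0 < ‖equivRealProd.symm p‖ := by
    rwa [norm_pos_iff, Ne, equivRealProd.symm_apply_eq, equivRealProd_apply, zero_re, zero_im,
      Prod.mk_zero_zero]
  rw [cross_eq_norm_mul_norm_mul_sin_sub_parg]
  exact mul_pos_iff_of_pos_left (mul_pos (norm_pos hu) (norm_pos hv))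

lemma parg_lt_pi_iff_arg_mem_Ico (p : ℝ × ℝ) :
    parg p < Real.pi ↔ arg (equivRealProd.symm p) ∈ Set.Ico 0 Real.pi := by
  have := neg_pi_lt_arg (equivRealProd.symm p)
  rw [parg_eq_ite]
  split_ifs with h
  · simp only [Set.mem_Ico]
    constructor <;> intro <;> linarith
  · simp only [Set.mem_Ico, not_lt.1 h, true_and]

lemma parg_lt_pi_iff {p : ℝ × ℝ} (hp : p ≠ 0) : parg p < Real.pi ↔ p ∈ Hminus := by
  have := fst_ne_zero_or_snd_ne_zero hp
  rw [parg_lt_pi_iff_arg_mem_Ico, Set.mem_Ico, arg_nonneg_iff, arg_lt_pi_iff]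
  simp only [equivRealProd_symm_apply, add_re, add_im, ofReal_re, ofReal_im, re_ofReal_mul,
    im_ofReal_mul, I_re, I_im, Hminus, Set.mem_ofPred_eq]
  grind

lemma pi_le_parg_iff {p : ℝ × ℝ} (hp : p ≠ 0) : Real.pi ≤ parg p ↔ p ∈ Hplus := by
  rw [mem_Hplus_iff_notMem_Hminus hp, ← parg_lt_pi_iff hp, not_lt]

/-- For nonzero vectors `u = (s,t)` and `v = (x,y)` and `Δ := s y - t x`, one has
`arg u < arg v` iff (`u ∈ H₋` and `v ∈ H₊`), or (`u ∈ H₋`, `v ∈ H₋` and `Δ > 0`), or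
(`u ∈ H₊`, `v ∈ H₊` and `Δ > 0`). -/
theorem parg_lt_iff (u v : ℝ × ℝ) (hu : u ≠ 0) (hv : v ≠ 0) :
    parg u < parg v ↔
      ((u ∈ Hminus ∧ v ∈ Hplus) ∨
       (u ∈ Hminus ∧ v ∈ Hminus ∧ 0 < u.1 * v.2 - u.2 * v.1) ∨
       (u ∈ Hplus ∧ v ∈ Hplus ∧ 0 < u.1 * v.2 - u.2 * v.1)) := by
  rw [lt_iff_of_mem_Ico_zero_two_pi (parg_mem_Ico u) (parg_mem_Ico v), parg_lt_pi_iff hu,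
    parg_lt_pi_iff hv, pi_le_parg_iff hu, pi_le_parg_iff hv, cross_pos_iff_sin_sub_parg_pos hu hv]
end

section
/- Let P = (V_0,…,V_{n−1}) be a locally-ordinary n-gon in ℝ² with arg P = (α_0,…,α_{n−1}), and suppose that for some j ≤ k in {0,…,n−1} one has α_j = α_{j+1} = … = α_k. Then V_{k+1} ≠ V_j, and: (I) arg(V_{k+1}−V_j) = arg(V_{i+1}−V_i) for all i with j ≤ i ≤ k; (II) the segment [V_j,V_{k+1}] equals the union of the segments [V_i,V_{i+1}] over j ≤ i ≤ k; (III) the half-open segments [V_i,V_{i+1}) for j ≤ i ≤ k are pairwise disjoint. -/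
open Set

theorem parg_eq_parg_iff_arg_eq (v w : ℝ × ℝ) :
    parg v = parg w ↔
      Complex.arg (v.1 + v.2 * Complex.I) = Complex.arg (w.1 + w.2 * Complex.I) := by
  have := Complex.neg_pi_lt_arg (v.1 + v.2 * Complex.I)
  have := Complex.arg_le_pi (v.1 + v.2 * Complex.I)
  have := Complex.neg_pi_lt_arg (w.1 + w.2 * Complex.I)
  have := Complex.arg_le_pi (w.1 + w.2 * Complex.I)
  unfold parg
  constructor
  · split_ifs <;> intro h <;> linarith [Real.pi_pos]
  · intro h
    rw [h]

theorem parg_eq_parg_iff_sameRay {v w : ℝ × ℝ} (hv : v ≠ 0) (hw : w ≠ 0) :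
    parg v = parg w ↔ SameRay ℝ v w := by
  rw [← SameRay.sameRay_map_iff Complex.equivRealProdLm.symm, Complex.sameRay_iff,
    or_iff_right (by simpa using hv), or_iff_right (by simpa using hw),
    Complex.equivRealProdLm_symm_apply, Complex.equivRealProdLm_symm_apply,
    parg_eq_parg_iff_arg_eq]

theorem Monotone.biUnion_Icc_Icc_succ {β : Type*} [LinearOrder β] {f : ℕ → β} (hf : Monotone f)
    {j k : ℕ} (hjk : j ≤ k) :
    ⋃ i ∈ Finset.Icc j k, Icc (f i) (f (i + 1)) = Icc (f j) (f (k + 1)) := by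
  induction k, hjk using Nat.le_induction with
  | base => simp
  | succ k hjk ih =>
    rw [← Finset.insert_Icc_right_eq_Icc_add_one (by omega), Finset.set_biUnion_insert, ih,
      union_comm, Icc_union_Icc_eq_Icc (hf (by omega)) (hf (by omega))]

section RayChain

variable {E : Type*} [NormedAddCommGroup E] (p : ℕ → E)

def pathLength (j m : ℕ) : ℝ := ∑ i ∈ Finset.Ico j m, ‖p (i + 1) - p i‖

theorem pathLength_mono (j : ℕ) : Monotone (pathLength p j) := fun _ _ hm =>
  Finset.sum_le_sum_of_subset_of_nonneg (Finset.Ico_subset_Ico_right hm)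
    fun _ _ _ => norm_nonneg _

theorem pathLength_pos {j m : ℕ} (hjm : j < m) (hp : p (j + 1) ≠ p j) : 0 < pathLength p j m :=
  Finset.sum_pos' (fun _ _ => norm_nonneg _)
    ⟨j, Finset.mem_Ico.2 ⟨le_rfl, hjm⟩, norm_pos_iff.2 (sub_ne_zero.2 hp)⟩

variable [NormedSpace ℝ E] {p} {u : E} {j k : ℕ}

theorem sub_eq_pathLength_smul (hu : ‖u‖ = 1)
    (hray : ∀ i, j ≤ i → i ≤ k → SameRay ℝ u (p (i + 1) - p i)) {m : ℕ} (hjm : j ≤ m)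
    (hmk : m ≤ k + 1) : p m - p j = pathLength p j m • u := by
  induction m, hjm using Nat.le_induction with
  | base => simp [pathLength]
  | succ m hjm ih =>
    have hedge : p (m + 1) - p m = ‖p (m + 1) - p m‖ • u := by
      simpa [hu] using (hray m hjm (by omega)).norm_smul_eq
    rw [pathLength, Finset.sum_Ico_succ_top hjm, add_smul, ← pathLength, ← ih (by omega),
      ← hedge]
    abel

theorem sub_ne_zero_of_sameRay (hu : ‖u‖ = 1)
    (hray : ∀ i, j ≤ i → i ≤ k → SameRay ℝ u (p (i + 1) - p i)) (hjk : j ≤ k)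
    (hp : p (j + 1) ≠ p j) : p (k + 1) - p j ≠ 0 := by
  rw [sub_eq_pathLength_smul hu hray (by omega) le_rfl]
  exact smul_ne_zero (pathLength_pos p (by omega) hp).ne' (norm_ne_zero_iff.1 (by simp [hu]))

theorem sameRay_sub_of_sameRay (hu : ‖u‖ = 1)
    (hray : ∀ i, j ≤ i → i ≤ k → SameRay ℝ u (p (i + 1) - p i)) {i : ℕ} (hji : j ≤ i)
    (hik : i ≤ k) : SameRay ℝ (p (k + 1) - p j) (p (i + 1) - p i) := by
  rw [sub_eq_pathLength_smul hu hray (by omega) le_rfl]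
  exact (hray i hji hik).nonneg_smul_left (Finset.sum_nonneg fun _ _ => norm_nonneg _)

theorem eq_lineMap_pathLength (hu : ‖u‖ = 1)
    (hray : ∀ i, j ≤ i → i ≤ k → SameRay ℝ u (p (i + 1) - p i)) {m : ℕ} (hjm : j ≤ m)
    (hmk : m ≤ k + 1) : p m = AffineMap.lineMap (p j) (p j + u) (pathLength p j m) := by
  rw [AffineMap.lineMap_apply_module', add_sub_cancel_left,
    ← sub_eq_pathLength_smul hu hray hjm hmk, sub_add_cancel]

theorem lineMap_add_injective (a : E) (hu : u ≠ 0) :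
    Function.Injective (AffineMap.lineMap a (a + u) : ℝ → E) :=
  AffineMap.lineMap_injective ℝ (by simpa using hu)

theorem segment_eq_image_lineMap_Icc (hu : ‖u‖ = 1)
    (hray : ∀ i, j ≤ i → i ≤ k → SameRay ℝ u (p (i + 1) - p i)) {a b : ℕ} (hja : j ≤ a)
    (hab : a ≤ b) (hbk : b ≤ k + 1) :
    segment ℝ (p a) (p b) =
      AffineMap.lineMap (p j) (p j + u) '' Icc (pathLength p j a) (pathLength p j b) := by
  rw [eq_lineMap_pathLength hu hray hja (by omega),
    eq_lineMap_pathLength hu hray (hja.trans hab) hbk, ← image_segment,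
    segment_eq_Icc (pathLength_mono p j hab)]

theorem segment_diff_eq_image_lineMap_Ico (hu : ‖u‖ = 1)
    (hray : ∀ i, j ≤ i → i ≤ k → SameRay ℝ u (p (i + 1) - p i)) {a b : ℕ} (hja : j ≤ a)
    (hab : a ≤ b) (hbk : b ≤ k + 1) :
    segment ℝ (p a) (p b) \ {p b} =
      AffineMap.lineMap (p j) (p j + u) '' Ico (pathLength p j a) (pathLength p j b) := by
  have hinj := lineMap_add_injective (p j) (u := u) (by rintro rfl; simp at hu)
  rw [segment_eq_image_lineMap_Icc hu hray hja hab hbk,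
    eq_lineMap_pathLength hu hray (hja.trans hab) hbk, ← image_singleton,
    ← image_sdiff hinj, Icc_sdiff_right]

theorem segment_eq_biUnion_segment_of_sameRay (hu : ‖u‖ = 1)
    (hray : ∀ i, j ≤ i → i ≤ k → SameRay ℝ u (p (i + 1) - p i)) (hjk : j ≤ k) :
    segment ℝ (p j) (p (k + 1)) = ⋃ i ∈ Finset.Icc j k, segment ℝ (p i) (p (i + 1)) := by
  rw [segment_eq_image_lineMap_Icc hu hray le_rfl (by omega) le_rfl,
    ← (pathLength_mono p j).biUnion_Icc_Icc_succ hjk, image_iUnion₂]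
  refine iUnion₂_congr fun i hi => ?_
  rw [Finset.mem_Icc] at hi
  rw [segment_eq_image_lineMap_Icc hu hray hi.1 i.le_succ (by omega)]

theorem disjoint_segment_diff_of_sameRay (hu : ‖u‖ = 1)
    (hray : ∀ i, j ≤ i → i ≤ k → SameRay ℝ u (p (i + 1) - p i)) {i t : ℕ} (hji : j ≤ i)
    (hik : i ≤ k) (hjt : j ≤ t) (htk : t ≤ k) (hit : i ≠ t) :
    Disjoint (segment ℝ (p i) (p (i + 1)) \ {p (i + 1)})
      (segment ℝ (p t) (p (t + 1)) \ {p (t + 1)}) := by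
  have hinj := lineMap_add_injective (p j) (u := u) (by rintro rfl; simp at hu)
  rw [segment_diff_eq_image_lineMap_Ico hu hray hji i.le_succ (by omega),
    segment_diff_eq_image_lineMap_Ico hu hray hjt t.le_succ (by omega), disjoint_image_iff hinj]
  simpa using (pathLength_mono p j).pairwise_disjoint_on_Ico_succ hit

end RayChain

theorem exists_norm_eq_one_sameRay_of_parg_eq {p : ℕ → ℝ × ℝ} {j k : ℕ} (hjk : j ≤ k)
    (hne : ∀ i, j ≤ i → i ≤ k → p (i + 1) ≠ p i)
    (harg : ∀ i, j ≤ i → i ≤ k → parg (p (i + 1) - p i) = parg (p (j + 1) - p j)) :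
    ∃ u : ℝ × ℝ, ‖u‖ = 1 ∧ ∀ i, j ≤ i → i ≤ k → SameRay ℝ u (p (i + 1) - p i) := by
  have hj : p (j + 1) - p j ≠ 0 := sub_ne_zero.2 (hne j le_rfl hjk)
  refine ⟨‖p (j + 1) - p j‖⁻¹ • (p (j + 1) - p j), norm_smul_inv_norm hj, fun i hji hik => ?_⟩
  have hi := sub_ne_zero.2 (hne i hji hik)
  exact ((parg_eq_parg_iff_sameRay hj hi).1 (harg i hji hik).symm).pos_smul_left
    (inv_pos.2 (norm_pos_iff.2 hj))

/-- If the edge arguments `α_j = … = α_k` of a locally-ordinary `n`-gon coincide, then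
`V_{k+1} ≠ V_j`, and: (I) `arg (V_{k+1} - V_j) = arg (V_{i+1} - V_i)` for `j ≤ i ≤ k`;
(II) `[V_j, V_{k+1}] = ⋃_{i=j}^{k} [V_i, V_{i+1}]`; (III) the half-open edges
`[V_i, V_{i+1})`, `j ≤ i ≤ k`, are pairwise disjoint. -/
theorem collinear_run_structure
    (n : ℕ) (V : ℕ → ℝ × ℝ) (hLO : LocallyOrdinary n V)
    (j k : ℕ) (hjk : j ≤ k) (hk : k < n)
    (h : ∀ i, j ≤ i → i ≤ k → edgeArg n V i = edgeArg n V j) :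
    V ((k + 1) % n) ≠ V j ∧
    (∀ i, j ≤ i → i ≤ k →
      parg (V ((k + 1) % n) - V j) = parg (V ((i + 1) % n) - V i)) ∧
    (segment ℝ (V j) (V ((k + 1) % n)) =
      ⋃ i ∈ Finset.Icc j k, segment ℝ (V i) (V ((i + 1) % n))) ∧
    (∀ i, j ≤ i → i ≤ k → ∀ t, j ≤ t → t ≤ k → i ≠ t →
      halfOpenEdge n V i ∩ halfOpenEdge n V t = ∅) := by
  -- reindexed so that the edge `[V i, V ((i + 1) % n)]` is `[p i, p (i + 1)]` for `i < n`
  set p : ℕ → ℝ × ℝ := fun i => V (i % n)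
  have hpV : ∀ i ≤ k, p i = V i := fun i hi => congrArg V (Nat.mod_eq_of_lt (hi.trans_lt hk))
  have hne : ∀ i, j ≤ i → i ≤ k → p (i + 1) ≠ p i := fun i _ hik => by
    rw [hpV i hik]
    exact (hLO i (hik.trans_lt hk)).symm
  obtain ⟨u, hu, hray⟩ := exists_norm_eq_one_sameRay_of_parg_eq hjk hne fun i hji hik => by
    rw [hpV i hik, hpV j hjk]
    exact h i hji hik
  have hrun := sub_ne_zero_of_sameRay hu hray hjk (hne j le_rfl hjk)
  rw [← hpV j hjk]
  refine ⟨sub_ne_zero.1 hrun, fun i hji hik => ?_, ?_, fun i hji hik t hjt htk hit => ?_⟩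
  · rw [← hpV i hik, parg_eq_parg_iff_sameRay hrun (sub_ne_zero.2 (hne i hji hik))]
    exact sameRay_sub_of_sameRay hu hray hji hik
  · refine (segment_eq_biUnion_segment_of_sameRay hu hray hjk).trans
      (iUnion₂_congr fun i hi => ?_)
    rw [hpV i (Finset.mem_Icc.1 hi).2]
  · rw [halfOpenEdge, halfOpenEdge, ← hpV i hik, ← hpV t htk, ← disjoint_iff_inter_eq_empty]
    exact disjoint_segment_diff_of_sameRay hu hray hji hik hjt htk hit
end
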